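/- Fix a point (x,y) ∈ ℝ^{d_x} × ℝ^{d_y}, write H := ∇_{yy} g(x,y), and assume: ‖∇_y f(x,y)‖ ≤ ℓ_{f,0}; H is symmetric with μ_g I ⪯ H and ‖H‖ ≤ ℓ_{g,1} (so 0 < μ_g ≤ ℓ_{g,1}); ‖∇_{xy} g(x,y)‖ ≤ ℓ_{g,1}; ‖∇h(x)‖ ≤ ℓ_{h,0}; and 0 < c̃ ≤ 1. For N ∈ ℕ define the truncated estimator h̄_N(x,y) := ∇_x f(x,y) + [(∇h(x)ᵀ (A⁺)ᵀ H − ∇_{xy} g(x,y)) · (c̃/ℓ_{g,1}) Σ_{n=0}^{N−1} V₂ (I_k − (c̃/ℓ_{g,1}) V₂ᵀ H V₂)ⁿ V₂ᵀ − ∇h(x)ᵀ (A⁺)ᵀ] ∇_y f(x,y). Then ‖h̄_N(x,y) − ∇̄f(x,y)‖ ≤ (1 + ℓ_{h,0}‖A⁺‖) ℓ_{g,1} ℓ_{f,0} (1 − c̃ μ_g/ℓ_{g,1})^N / μ_g. -/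

import Mathlib

open Matrix
open scoped Kronecker

noncomputable section

/-- `ℝ^n` with the Euclidean inner product. -/
abbrev Euc (n : ℕ) : Type := EuclideanSpace ℝ (Fin n)

/-- Reinterpret a plain vector as an element of Euclidean space. -/
def toEuc {n : ℕ} (v : Fin n → ℝ) : Euc n := WithLp.toLp 2 v

/-- Spectral (operator) norm of a real matrix. -/
def specNorm {m n : Type*} [Fintype m] [Fintype n] [DecidableEq n]
    (M : Matrix m n ℝ) : ℝ :=
  ‖LinearMap.toContinuousLinearMap (Matrix.toEuclideanLin M)‖

/-- The four Moore–Penrose identities. -/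
def IsMoorePenrose {a b : ℕ} (A : Matrix (Fin a) (Fin b) ℝ)
    (Ap : Matrix (Fin b) (Fin a) ℝ) : Prop :=
  A * Ap * A = A ∧ Ap * A * Ap = Ap ∧ (A * Ap)ᵀ = A * Ap ∧ (Ap * A)ᵀ = Ap * A

/-- Partial gradient in the first variable. -/
def gradx {dx dy : ℕ} (f : Euc dx → Euc dy → ℝ) (x : Euc dx) (y : Euc dy) : Euc dx :=
  gradient (fun x' => f x' y) x

/-- Partial gradient in the second variable. -/
def grady {dx dy : ℕ} (f : Euc dx → Euc dy → ℝ) (x : Euc dx) (y : Euc dy) : Euc dy :=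
  gradient (fun y' => f x y') y

/-- Jacobian matrix of a vector-valued map: entry `(i, j)` is `∂φ_i/∂x_j`. -/
def jacM {n m : ℕ} (φ : Euc n → Euc m) (x : Euc n) : Matrix (Fin m) (Fin n) ℝ :=
  Matrix.of fun i j => fderiv ℝ φ x (EuclideanSpace.single j (1 : ℝ)) i

/-- `∇_{yy} g(x,y)`: entry `(i, j)` is `∂²g/∂y_i∂y_j`. -/
def hessYY {dx dy : ℕ} (g : Euc dx → Euc dy → ℝ) (x : Euc dx) (y : Euc dy) :
    Matrix (Fin dy) (Fin dy) ℝ :=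
  Matrix.of fun i j => gradient (fun y' => grady g x y' j) y i

/-- `∇_{xy} g(x,y)`: entry `(i, j)` is `∂²g/∂x_i∂y_j`. -/
def hessXY {dx dy : ℕ} (g : Euc dx → Euc dy → ℝ) (x : Euc dx) (y : Euc dy) :
    Matrix (Fin dx) (Fin dy) ℝ :=
  Matrix.of fun i j => gradient (fun x' => grady g x' y j) x i

/-- `∇_{yx} g(x,y)`: entry `(i, j)` is `∂²g/∂y_i∂x_j`. -/
def hessYX {dx dy : ℕ} (g : Euc dx → Euc dy → ℝ) (x : Euc dx) (y : Euc dy) :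
    Matrix (Fin dy) (Fin dx) ℝ :=
  Matrix.of fun i j => gradient (fun y' => gradx g x y' j) y i

/-- `∇_{xx} g(x,y)`. -/
def hessXX {dx dy : ℕ} (g : Euc dx → Euc dy → ℝ) (x : Euc dx) (y : Euc dy) :
    Matrix (Fin dx) (Fin dx) ℝ :=
  Matrix.of fun i j => gradient (fun x' => gradx g x' y j) x i

/-- The surrogate upper-level gradient `∇̄f(x,y)`. -/
def nablaBarF {dx dy my k : ℕ} (Ap : Matrix (Fin dy) (Fin my) ℝ)
    (V₂ : Matrix (Fin dy) (Fin k) ℝ) (f g : Euc dx → Euc dy → ℝ)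
    (h : Euc dx → Euc my) (x : Euc dx) (y : Euc dy) : Euc dx :=
  gradx f x y + toEuc
    ((((jacM h x)ᵀ * Apᵀ * hessYY g x y - hessXY g x y) * V₂ *
        (V₂ᵀ * hessYY g x y * V₂)⁻¹ * V₂ᵀ - (jacM h x)ᵀ * Apᵀ).mulVec (grady f x y))

/-! With `B := V₂ᵀ H V₂` and `X := 1 - (c̃/ℓ_{g,1}) B`, the truncated sum telescopes:
`(c̃/ℓ_{g,1}) ∑_{n<N} Xⁿ = B⁻¹ - B⁻¹ Xᴺ`, so the estimator differs from `∇̄f` only by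
`(∇hᵀ A⁺ᵀ H - ∇_{xy} g) V₂ B⁻¹ Xᴺ V₂ᵀ ∇_y f`. Compressing by the isometry `V₂` keeps the
spectrum of `B` inside `[μ_g, ℓ_{g,1}]`, and the functional calculus then bounds `‖B⁻¹ Xᴺ‖` by
the supremum of `λ⁻¹ (1 - c̃ λ / ℓ_{g,1})ᴺ` over that interval, which is
`(1 - c̃ μ_g / ℓ_{g,1})ᴺ / μ_g`. -/

open scoped Matrix.Norms.L2Operator

lemma abs_inv_mul_one_sub_mul_pow_le {μ L t x : ℝ} (hμ : 0 < μ) (ht : 0 ≤ t) (htL : t * L ≤ 1)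
    (hx : x ∈ Set.Icc μ L) (N : ℕ) : |x⁻¹ * (1 - t * x) ^ N| ≤ (1 - t * μ) ^ N / μ := by
  obtain ⟨hμx, hxL⟩ := hx
  have hx0 : 0 < x := hμ.trans_le hμx
  have h1 : 0 ≤ 1 - t * x := by nlinarith
  rw [abs_of_nonneg (by positivity), div_eq_inv_mul]
  gcongr

lemma smul_geom_sum_one_sub_smul {K R : Type*} [CommRing K] [Ring R] [Algebra K R] {a b : R}
    (hab : a * b = 1) (t : K) (N : ℕ) :
    t • ∑ i ∈ Finset.range N, (1 - t • b) ^ i = a - a * (1 - t • b) ^ N := by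
  calc t • ∑ i ∈ Finset.range N, (1 - t • b) ^ i
      = a * ((1 - (1 - t • b)) * ∑ i ∈ Finset.range N, (1 - t • b) ^ i) := by
        rw [sub_sub_cancel, smul_mul_assoc, mul_smul_comm, ← mul_assoc, hab, one_mul]
    _ = a - a * (1 - t • b) ^ N := by rw [mul_neg_geom_sum, mul_sub, mul_one]

namespace Matrix

section L2OpNorm

variable {𝕜 : Type*} [RCLike 𝕜] {m n : Type*} [Fintype m] [Fintype n] [DecidableEq n]

lemma specNorm_eq_l2_opNorm (A : Matrix m n ℝ) : specNorm A = ‖A‖ := rfl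

lemma l2_opNorm_one_le : ‖(1 : Matrix n n 𝕜)‖ ≤ 1 := by
  rw [cstar_norm_def, map_one]
  exact ContinuousLinearMap.norm_id_le

lemma l2_opNorm_le_one_of_conjTranspose_mul_self_eq_one {A : Matrix m n 𝕜} (h : Aᴴ * A = 1) :
    ‖A‖ ≤ 1 := by
  have h1 : ‖A‖ * ‖A‖ ≤ 1 := by
    rw [← l2_opNorm_conjTranspose_mul_self, h]
    exact l2_opNorm_one_le
  nlinarith [norm_nonneg A]

lemma norm_le_l2_opNorm_of_mem_spectrum {A : Matrix n n 𝕜} {x : 𝕜} (hx : x ∈ spectrum 𝕜 A) :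
    ‖x‖ ≤ ‖A‖ := by
  cases isEmpty_or_nonempty n
  · simp [spectrum.of_subsingleton] at hx
  · exact spectrum.norm_le_norm_of_mem hx

lemma IsHermitian.norm_cfc_le {A : Matrix n n 𝕜} (hA : A.IsHermitian) {f : ℝ → ℝ} {c : ℝ}
    (hc : 0 ≤ c) (hf : ∀ x ∈ spectrum ℝ A, |f x| ≤ c) : ‖cfc f A‖ ≤ c := by
  rw [hA.cfc_eq, IsHermitian.cfc, Unitary.conjStarAlgAut_apply, ← Unitary.coe_star,
    CStarRing.norm_mul_coe_unitary, CStarRing.norm_coe_unitary_mul, l2_opNorm_diagonal,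
    pi_norm_le_iff_of_nonneg hc]
  intro i
  simpa using hf _ (hA.eigenvalues_mem_spectrum_real i)

end L2OpNorm

section Real

variable {m n : Type*} [Fintype m] [Fintype n] [DecidableEq m] [DecidableEq n]

lemma l2_opNorm_transpose (A : Matrix m n ℝ) : ‖Aᵀ‖ = ‖A‖ := l2_opNorm_conjTranspose A

lemma norm_toEuc_mulVec_sub_mulVec_le {a b : ℕ} (A B : Matrix (Fin a) (Fin b) ℝ)
    (v : Fin b → ℝ) : ‖toEuc (A *ᵥ v) - toEuc (B *ᵥ v)‖ ≤ ‖A - B‖ * ‖toEuc v‖ := by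
  have h := (A - B).l2_opNorm_mulVec (toEuc v)
  rw [sub_mulVec] at h
  exact h

lemma l2_opNorm_transpose_mul_mul_le {V : Matrix m n ℝ} (hV : Vᵀ * V = 1) (C : Matrix m m ℝ) :
    ‖Vᵀ * C * V‖ ≤ ‖C‖ := by
  have hV1 : ‖V‖ ≤ 1 := l2_opNorm_le_one_of_conjTranspose_mul_self_eq_one hV
  calc ‖Vᵀ * C * V‖ ≤ ‖V‖ * ‖C‖ * ‖V‖ := by
        grw [l2_opNorm_mul, l2_opNorm_mul, l2_opNorm_transpose]
    _ ≤ 1 * ‖C‖ * 1 := by gcongr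
    _ = ‖C‖ := by ring

lemma l2_opNorm_mul_mul_transpose_le {V : Matrix m n ℝ} (hV : Vᵀ * V = 1) (C : Matrix n n ℝ) :
    ‖V * C * Vᵀ‖ ≤ ‖C‖ := by
  have hV1 : ‖V‖ ≤ 1 := l2_opNorm_le_one_of_conjTranspose_mul_self_eq_one hV
  calc ‖V * C * Vᵀ‖ ≤ ‖V‖ * ‖C‖ * ‖V‖ := by
        grw [l2_opNorm_mul, l2_opNorm_mul, l2_opNorm_transpose]
    _ ≤ 1 * ‖C‖ * 1 := by gcongr
    _ = ‖C‖ := by ring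

lemma PosSemidef.transpose_mul_mul_sub_smul {V : Matrix m n ℝ} (hV : Vᵀ * V = 1)
    {H : Matrix m m ℝ} {μ : ℝ} (hH : (H - μ • 1).PosSemidef) : (Vᵀ * H * V - μ • 1).PosSemidef := by
  simpa [Matrix.mul_sub, Matrix.sub_mul, hV] using hH.conjTranspose_mul_mul_same V

end Real

lemma posDef_of_posSemidef_sub_smul {n : Type*} [DecidableEq n] {B : Matrix n n ℝ} {μ : ℝ}
    (hB : (B - μ • 1).PosSemidef) (hμ : 0 < μ) : B.PosDef := by
  simpa using PosDef.posSemidef_add hB (PosDef.one.smul hμ)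

variable {n : Type*} [Fintype n] [DecidableEq n]

lemma spectrum_subset_Icc_of_posSemidef_sub_smul {B : Matrix n n ℝ} {μ L : ℝ}
    (hμ : (B - μ • 1).PosSemidef) (hL : ‖B‖ ≤ L) : spectrum ℝ B ⊆ Set.Icc μ L := by
  intro x hx
  refine ⟨?_, (Real.le_norm_self x).trans ((norm_le_l2_opNorm_of_mem_spectrum hx).trans hL)⟩
  have hsub : x - μ ∈ spectrum ℝ (B - μ • 1) := by
    rw [← Algebra.algebraMap_eq_smul_one, ← spectrum.sub_singleton_eq]
    exact Set.sub_mem_sub hx rfl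
  simpa using (posSemidef_iff_isHermitian_and_spectrum_nonneg.mp hμ).2 hsub

lemma IsHermitian.inv_mul_one_sub_smul_pow_eq_cfc {B : Matrix n n ℝ} (hB : B.IsHermitian)
    (hB0 : IsUnit B) (t : ℝ) (N : ℕ) :
    B⁻¹ * (1 - t • B) ^ N = cfc (fun x => x⁻¹ * (1 - t * x) ^ N) B := by
  have hfin : (spectrum ℝ B).Finite := finite_real_spectrum
  have hlin : cfc (fun x => 1 - t * x) B = 1 - t • B := by
    rw [cfc_sub _ _ B (hfin.continuousOn _) (hfin.continuousOn _), cfc_const_one ℝ B,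
      cfc_const_mul_id t B hB.isSelfAdjoint]
  rw [cfc_mul (fun x => x⁻¹) (fun x => (1 - t * x) ^ N) B (hfin.continuousOn _)
      (hfin.continuousOn _), cfc_ringInverse_id B hB0 hB.isSelfAdjoint,
    ← nonsing_inv_eq_ringInverse, cfc_pow (fun x => 1 - t * x) N B (hfin.continuousOn _), hlin]

lemma norm_inv_mul_one_sub_smul_pow_le {B : Matrix n n ℝ} {μ L t : ℝ}
    (hμB : (B - μ • 1).PosSemidef) (hBL : ‖B‖ ≤ L) (hμ : 0 < μ) (hμL : μ ≤ L) (ht : 0 ≤ t)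
    (htL : t * L ≤ 1) (N : ℕ) : ‖B⁻¹ * (1 - t • B) ^ N‖ ≤ (1 - t * μ) ^ N / μ := by
  have hB := posDef_of_posSemidef_sub_smul hμB hμ
  have htμ : 0 ≤ 1 - t * μ := by nlinarith
  rw [hB.isHermitian.inv_mul_one_sub_smul_pow_eq_cfc hB.isUnit]
  exact hB.isHermitian.norm_cfc_le (by positivity) fun x hx =>
    abs_inv_mul_one_sub_mul_pow_le hμ ht htL
      (spectrum_subset_Icc_of_posSemidef_sub_smul hμB hBL hx) N

lemma truncated_neumann_sub_inv {K : Type*} [CommRing K] {l m : Type*} [Fintype m]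
    {B : Matrix n n K} (hB : IsUnit B) (M J : Matrix l m K) (V : Matrix m n K) (W : Matrix n m K) (t : K) (N : ℕ) :
    (M * (t • ∑ i ∈ Finset.range N, V * (1 - t • B) ^ i * W) - J) - (M * V * B⁻¹ * W - J)
      = -(M * (V * (B⁻¹ * (1 - t • B) ^ N) * W)) := by
  have hBinv : B⁻¹ * B = 1 := nonsing_inv_mul B ((isUnit_iff_isUnit_det B).mp hB)
  rw [← Matrix.sum_mul, ← Matrix.mul_sum, ← Matrix.smul_mul, ← Matrix.mul_smul,
    smul_geom_sum_one_sub_smul hBinv]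
  simp only [Matrix.mul_sub, Matrix.sub_mul, Matrix.mul_assoc]
  abel

end Matrix

theorem truncated_estimator_bias_bound_general
    {dx dy my k : ℕ}
    (Ap : Matrix (Fin dy) (Fin my) ℝ)
    (V₂ : Matrix (Fin dy) (Fin k) ℝ)
    (hV₂orth : V₂ᵀ * V₂ = 1)
    (f g : Euc dx → Euc dy → ℝ) (h : Euc dx → Euc my)
    (x : Euc dx) (y : Euc dy)
    (ℓf0 μg ℓg1 ℓh0 c : ℝ)
    (hf0 : ‖grady f x y‖ ≤ ℓf0)
    (hpsd : (hessYY g x y - μg • (1 : Matrix (Fin dy) (Fin dy) ℝ)).PosSemidef)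
    (hHn : specNorm (hessYY g x y) ≤ ℓg1)
    (hμ : 0 < μg) (hμℓ : μg ≤ ℓg1)
    (hxy : specNorm (hessXY g x y) ≤ ℓg1)
    (hjh : specNorm (jacM h x) ≤ ℓh0)
    (hc0 : 0 < c) (hc1 : c ≤ 1) (N : ℕ) :
    ‖(gradx f x y + toEuc
        ((((jacM h x)ᵀ * Apᵀ * hessYY g x y - hessXY g x y) *
            ((c / ℓg1) • ∑ n ∈ Finset.range N,
              V₂ * ((1 : Matrix (Fin k) (Fin k) ℝ)
                  - (c / ℓg1) • (V₂ᵀ * hessYY g x y * V₂)) ^ n * V₂ᵀ)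
          - (jacM h x)ᵀ * Apᵀ).mulVec (grady f x y)))
      - nablaBarF Ap V₂ f g h x y‖
      ≤ (1 + ℓh0 * specNorm Ap) * ℓg1 * ℓf0 * (1 - c * μg / ℓg1) ^ N / μg := by
  simp only [Matrix.specNorm_eq_l2_opNorm] at hHn hxy hjh ⊢
  set H := hessYY g x y
  set B := V₂ᵀ * H * V₂
  set t := c / ℓg1
  set M := (jacM h x)ᵀ * Apᵀ * H - hessXY g x y
  have hℓ : 0 < ℓg1 := hμ.trans_le hμℓ
  have hB : (B - μg • 1).PosSemidef := hpsd.transpose_mul_mul_sub_smul hV₂orth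
  have hR : ‖B⁻¹ * (1 - t • B) ^ N‖ ≤ (1 - t * μg) ^ N / μg :=
    Matrix.norm_inv_mul_one_sub_smul_pow_le hB
      ((l2_opNorm_transpose_mul_mul_le hV₂orth H).trans hHn) hμ hμℓ (div_pos hc0 hℓ).le
      ((div_mul_cancel₀ c hℓ.ne').trans_le hc1) N
  have hM : ‖M‖ ≤ (1 + ℓh0 * ‖Ap‖) * ℓg1 := by
    calc ‖M‖ ≤ ‖jacM h x‖ * ‖Ap‖ * ‖H‖ + ‖hessXY g x y‖ := by
          grw [norm_sub_le, l2_opNorm_mul, l2_opNorm_mul, l2_opNorm_transpose,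
            l2_opNorm_transpose]
      _ ≤ ℓh0 * ‖Ap‖ * ℓg1 + ℓg1 := by
          gcongr; exact mul_nonneg ((norm_nonneg _).trans hjh) (norm_nonneg _)
      _ = (1 + ℓh0 * ‖Ap‖) * ℓg1 := by ring
  have hq : 0 ≤ (1 - t * μg) ^ N / μg := (norm_nonneg _).trans hR
  have hK : 0 ≤ (1 + ℓh0 * ‖Ap‖) * ℓg1 := (norm_nonneg _).trans hM
  rw [nablaBarF, add_sub_add_left_eq_sub]
  grw [norm_toEuc_mulVec_sub_mulVec_le, Matrix.truncated_neumann_sub_inv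
    (Matrix.posDef_of_posSemidef_sub_smul hB hμ).isUnit, norm_neg, l2_opNorm_mul,
    l2_opNorm_mul_mul_transpose_le hV₂orth, hM, hR]
  calc (1 + ℓh0 * ‖Ap‖) * ℓg1 * ((1 - t * μg) ^ N / μg) * ‖toEuc (grady f x y)‖
      ≤ (1 + ℓh0 * ‖Ap‖) * ℓg1 * ((1 - t * μg) ^ N / μg) * ℓf0 := by gcongr; exact hf0
    _ = (1 + ℓh0 * ‖Ap‖) * ℓg1 * ℓf0 * (1 - c * μg / ℓg1) ^ N / μg := by
        rw [mul_div_right_comm]; ring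

/-- bias of the truncated Neumann-series gradient estimator. -/
theorem truncated_estimator_bias_bound
    {dx dy my k : ℕ}
    (A : Matrix (Fin my) (Fin dy) ℝ) (Ap : Matrix (Fin dy) (Fin my) ℝ)
    (hMP : IsMoorePenrose A Ap)
    (V₂ : Matrix (Fin dy) (Fin k) ℝ)
    (hV₂orth : V₂ᵀ * V₂ = 1)
    (hV₂ker : LinearMap.range V₂.mulVecLin = LinearMap.ker A.mulVecLin)
    (f g : Euc dx → Euc dy → ℝ) (h : Euc dx → Euc my)
    (x : Euc dx) (y : Euc dy)
    (ℓf0 μg ℓg1 ℓh0 c : ℝ)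
    (hf0 : ‖grady f x y‖ ≤ ℓf0)
    (hsymm : (hessYY g x y).IsSymm)
    (hpsd : (hessYY g x y - μg • (1 : Matrix (Fin dy) (Fin dy) ℝ)).PosSemidef)
    (hHn : specNorm (hessYY g x y) ≤ ℓg1)
    (hμ : 0 < μg) (hμℓ : μg ≤ ℓg1)
    (hxy : specNorm (hessXY g x y) ≤ ℓg1)
    (hjh : specNorm (jacM h x) ≤ ℓh0)
    (hc0 : 0 < c) (hc1 : c ≤ 1) (N : ℕ) :
    ‖(gradx f x y + toEuc
        ((((jacM h x)ᵀ * Apᵀ * hessYY g x y - hessXY g x y) *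
            ((c / ℓg1) • ∑ n ∈ Finset.range N,
              V₂ * ((1 : Matrix (Fin k) (Fin k) ℝ)
                  - (c / ℓg1) • (V₂ᵀ * hessYY g x y * V₂)) ^ n * V₂ᵀ)
          - (jacM h x)ᵀ * Apᵀ).mulVec (grady f x y)))
      - nablaBarF Ap V₂ f g h x y‖
      ≤ (1 + ℓh0 * specNorm Ap) * ℓg1 * ℓf0 * (1 - c * μg / ℓg1) ^ N / μg :=
  truncated_estimator_bias_bound_general Ap V₂ hV₂orth f g h x y ℓf0 μg ℓg1 ℓh0 c hf0 hpsd hHn hμ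
    hμℓ hxy hjh hc0 hc1 N
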